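/- arXiv:1903.07863 — 7 statements merged into one kernel-verified Lean document; each statement's English description precedes it below -/
import Mathlib

section
/- Let G be a finite connected simple graph with clique number ω(G) = s, let Q be a clique of G with |Q| = s, and suppose ℓ : V(G) → {1,…,k} is a d-lucky labeling of G. Then k·(Δ_G(Q) − s + 2) ≥ 2·δ_G(Q) − Δ_G(Q) + 1. -/
attribute [local instance] Classical.propDecidable

/-- The d-lucky sum of a vertex `u`. -/
noncomputable def dLuckySum {V : Type*} [Fintype V] (G : SimpleGraph V) (ℓ : V → ℕ)
    (u : V) : ℕ :=
  G.degree u + ∑ v ∈ G.neighborFinset u, ℓ v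

/-- A labeling is d-lucky if adjacent vertices have distinct d-lucky sums. -/
def IsDLuckyLabeling {V : Type*} [Fintype V] (G : SimpleGraph V) (ℓ : V → ℕ) : Prop :=
  ∀ ⦃u v : V⦄, G.Adj u v → dLuckySum G ℓ u ≠ dLuckySum G ℓ v

/-- `δ_G(Q)`: the minimum degree in `G` among the vertices of `Q`. -/
noncomputable def minDegOn {V : Type*} [Fintype V] (G : SimpleGraph V) (Q : Finset V) : ℕ :=
  sInf ((fun v => G.degree v) '' (Q : Set V))

/-- `Δ_G(Q)`: the maximum degree in `G` among the vertices of `Q`. -/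
noncomputable def maxDegOn {V : Type*} [Fintype V] (G : SimpleGraph V) (Q : Finset V) : ℕ :=
  sSup ((fun v => G.degree v) '' (Q : Set V))

set_option maxHeartbeats 1000000 in
theorem dLucky_clique_inequality {V : Type*} [Fintype V] (G : SimpleGraph V)
    (hconn : G.Connected) (s : ℕ) (hs : G.cliqueNum = s)
    (Q : Finset V) (hQ : G.IsNClique s Q)
    (k : ℕ) (ℓ : V → ℕ) (hrange : ∀ v : V, 1 ≤ ℓ v ∧ ℓ v ≤ k)
    (hℓ : IsDLuckyLabeling G ℓ) :
    (k : ℤ) * ((maxDegOn G Q : ℤ) - (s : ℤ) + 2) ≥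
      2 * (minDegOn G Q : ℤ) - (maxDegOn G Q : ℤ) + 1 := by
  have hk1 : 1 ≤ k := by
    obtain ⟨v⟩ := hconn.nonempty
    exact le_trans (hrange v).1 (hrange v).2
  rcases Nat.eq_zero_or_pos s with hs0 | hspos
  · subst hs0
    have hQe : Q = ∅ := Finset.card_eq_zero.mp hQ.card_eq
    subst hQe
    simp only [minDegOn, maxDegOn, Finset.coe_empty, Set.image_empty]
    rw [Nat.sInf_empty]
    have : sSup (∅ : Set ℕ) = 0 := csSup_empty
    rw [this]
    push_cast
    have : (1:ℤ) ≤ (k:ℤ) := by exact_mod_cast hk1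
    linarith
  -- s ≥ 1
  have hQne : Q.Nonempty := by
    rw [← Finset.card_pos, hQ.card_eq]; exact hspos
  set f : V → ℕ := dLuckySum G ℓ with hf
  set T : Finset ℕ := Q.image f with hT
  have hinj : Set.InjOn f (Q : Set V) := by
    intro a ha b hb hab
    by_contra hne
    exact hℓ (hQ.isClique ha hb hne) hab
  have hTcard : T.card = s := by
    rw [hT, Finset.card_image_of_injOn hinj, hQ.card_eq]
  have hTne : T.Nonempty := hQne.image f
  set m := T.min' hTne with hm
  set M := T.max' hTne with hM
  have hsub : T ⊆ Finset.Icc m M := by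
    intro x hx
    exact Finset.mem_Icc.mpr ⟨T.min'_le x hx, T.le_max' x hx⟩
  have hcard : s ≤ M + 1 - m := by
    have := Finset.card_le_card hsub
    rwa [hTcard, Nat.card_Icc] at this
  have hmM : m ≤ M := T.min'_le M (T.max'_mem hTne)
  have hgap : (m : ℤ) + (s : ℤ) - 1 ≤ (M : ℤ) := by omega
  obtain ⟨u, hu, hum⟩ : ∃ u ∈ Q, f u = m := Finset.mem_image.mp (T.min'_mem hTne)
  obtain ⟨w, hw, hwM⟩ : ∃ w ∈ Q, f w = M := Finset.mem_image.mp (T.max'_mem hTne)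
  set L : ℕ := ∑ v ∈ Q, ℓ v with hL
  -- generic facts for a vertex x ∈ Q
  have key : ∀ x ∈ Q,
      (L : ℤ) - ℓ x + ((G.degree x : ℤ) - (s : ℤ) + 1) ≤
          (∑ v ∈ G.neighborFinset x, (ℓ v : ℤ)) ∧
      (∑ v ∈ G.neighborFinset x, (ℓ v : ℤ)) ≤
          (L : ℤ) - ℓ x + k * ((G.degree x : ℤ) - (s : ℤ) + 1) := by
    intro x hx
    set S := G.neighborFinset x with hS
    have hQ'sub : Q.erase x ⊆ S := by
      intro v hv
      rw [Finset.mem_erase] at hv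
      rw [hS, SimpleGraph.mem_neighborFinset]
      exact hQ.isClique hx hv.2 (fun h => hv.1 h.symm)
    have hsum_split : ∑ v ∈ S \ Q.erase x, (ℓ v : ℤ) + ∑ v ∈ Q.erase x, (ℓ v : ℤ)
        = ∑ v ∈ S, (ℓ v : ℤ) := Finset.sum_sdiff hQ'sub
    have herase : ∑ v ∈ Q.erase x, (ℓ v : ℤ) + (ℓ x : ℤ) = (L : ℤ) := by
      rw [hL]; push_cast
      exact_mod_cast (congrArg (Nat.cast : ℕ → ℤ) (Finset.sum_erase_add Q ℓ hx))
    have hcards : (S \ Q.erase x).card = G.degree x - (s - 1) := by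
      rw [Finset.card_sdiff_of_subset hQ'sub, Finset.card_erase_of_mem hx, hQ.card_eq,
        hS, G.card_neighborFinset_eq_degree]
    have hdegge : s - 1 ≤ G.degree x := by
      have := Finset.card_le_card hQ'sub
      rwa [Finset.card_erase_of_mem hx, hQ.card_eq, hS,
        G.card_neighborFinset_eq_degree] at this
    have hcardZ : ((S \ Q.erase x).card : ℤ) = (G.degree x : ℤ) - (s : ℤ) + 1 := by
      rw [hcards]; omega
    have hlow : ((S \ Q.erase x).card : ℤ) ≤ ∑ v ∈ S \ Q.erase x, (ℓ v : ℤ) := by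
      calc ((S \ Q.erase x).card : ℤ) = ∑ v ∈ S \ Q.erase x, (1 : ℤ) := by simp
        _ ≤ ∑ v ∈ S \ Q.erase x, (ℓ v : ℤ) := by
            apply Finset.sum_le_sum
            intro i _
            exact_mod_cast (hrange i).1
    have hhigh : ∑ v ∈ S \ Q.erase x, (ℓ v : ℤ) ≤ ((S \ Q.erase x).card : ℤ) * k := by
      calc ∑ v ∈ S \ Q.erase x, (ℓ v : ℤ) ≤ ∑ v ∈ S \ Q.erase x, (k : ℤ) := by
            apply Finset.sum_le_sum
            intro i _
            exact_mod_cast (hrange i).2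
        _ = ((S \ Q.erase x).card : ℤ) * k := by simp [mul_comm]
    constructor
    · nlinarith [hlow, hsum_split, herase, hcardZ]
    · nlinarith [hhigh, hsum_split, herase, hcardZ]
  -- degree bounds
  have hδ : ∀ x ∈ Q, minDegOn G Q ≤ G.degree x := by
    intro x hx
    exact Nat.sInf_le ⟨x, by simpa using hx, rfl⟩
  have hΔ : ∀ x ∈ Q, G.degree x ≤ maxDegOn G Q := by
    intro x hx
    apply le_csSup
    · exact (Set.Finite.image _ (Q.finite_toSet)).bddAbove
    · exact ⟨x, by simpa using hx, rfl⟩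
  -- bounds on m and M
  have hfu : (f u : ℤ) = (G.degree u : ℤ) + ∑ v ∈ G.neighborFinset u, (ℓ v : ℤ) := by
    rw [hf]; unfold dLuckySum; push_cast; ring
  have hfw : (f w : ℤ) = (G.degree w : ℤ) + ∑ v ∈ G.neighborFinset w, (ℓ v : ℤ) := by
    rw [hf]; unfold dLuckySum; push_cast; ring
  have hku : (ℓ u : ℤ) ≤ k := by exact_mod_cast (hrange u).2
  have h1w : (1 : ℤ) ≤ ℓ w := by exact_mod_cast (hrange w).1
  have hδu : (minDegOn G Q : ℤ) ≤ G.degree u := by exact_mod_cast hδ u hu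
  have hΔw : (G.degree w : ℤ) ≤ maxDegOn G Q := by exact_mod_cast hΔ w hw
  have hΔu : (G.degree u : ℤ) ≤ maxDegOn G Q := by exact_mod_cast hΔ u hu
  have hdegw : (s : ℤ) - 1 ≤ G.degree w := by
    have := (key w hw)
    -- derive from erase subset again; easier: redo
    have hQ'sub : Q.erase w ⊆ G.neighborFinset w := by
      intro v hv
      rw [Finset.mem_erase] at hv
      rw [SimpleGraph.mem_neighborFinset]
      exact hQ.isClique hw hv.2 (fun h => hv.1 h.symm)
    have h2 := Finset.card_le_card hQ'sub
    rw [Finset.card_erase_of_mem hw, hQ.card_eq, G.card_neighborFinset_eq_degree] at h2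
    omega
  have hkZ : (1 : ℤ) ≤ k := by exact_mod_cast hk1
  have hmin : 2 * (G.degree u : ℤ) + L - ℓ u - s + 1 ≤ (m : ℤ) := by
    rw [← hum, hfu]
    have := (key u hu).1
    linarith
  have hmax : (M : ℤ) ≤ (G.degree w : ℤ) + L - ℓ w + k * ((G.degree w : ℤ) - s + 1) := by
    rw [← hwM, hfw]
    have := (key w hw).2
    linarith
  have hmono : (k : ℤ) * ((G.degree w : ℤ) - s + 1) ≤ k * ((maxDegOn G Q : ℤ) - s + 1) := by
    apply mul_le_mul_of_nonneg_left _ (by linarith)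
    linarith
  nlinarith [hgap, hmin, hmax, hmono, hδu, hΔw, hku, h1w, hkZ]
end

section
/- Let G be a finite connected simple graph and let r be a natural number such that every vertex v that belongs to some clique of G of maximum size ω(G) satisfies deg_G(v) = r. Then η_dl(G) ≥ ⌈(r + 1) / (r − ω(G) + 2)⌉. -/
attribute [local instance] Classical.propDecidable

/-- The d-lucky number: the least positive integer `k` such that `G` admits a
d-lucky labeling with labels in `{1, …, k}`. -/
noncomputable def dLuckyNumber {V : Type*} [Fintype V] (G : SimpleGraph V) : ℕ :=
  sInf {k : ℕ | 0 < k ∧ ∃ ℓ : V → ℕ, (∀ v : V, 1 ≤ ℓ v ∧ ℓ v ≤ k) ∧ IsDLuckyLabeling G ℓ}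

lemma exists_dlucky_aux {V : Type*} [Fintype V] [Nonempty V] (G : SimpleGraph V) :
    ∃ k : ℕ, 0 < k ∧ ∃ ℓ : V → ℕ, (∀ v : V, 1 ≤ ℓ v ∧ ℓ v ≤ k) ∧ IsDLuckyLabeling G ℓ := by
  classical
  set n := Fintype.card V with hn
  have hn0 : 0 < n := Fintype.card_pos
  set e := Fintype.equivFin V with he
  refine ⟨n * 2 ^ n, by positivity, fun v => n * 2 ^ ((e v : ℕ)), ?_, ?_⟩
  · intro v
    constructor
    · exact Nat.succ_le_of_lt (by positivity)
    · exact Nat.mul_le_mul_left n (Nat.pow_le_pow_right (by norm_num) (le_of_lt (e v).2))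
  · intro u v huv h
    rw [dLuckySum, dLuckySum] at h
    have hinj : Function.Injective (fun w : V => ((e w : ℕ))) :=
      Fin.val_injective.comp e.injective
    have hsum : ∀ x : V, ∑ w ∈ G.neighborFinset x, n * 2 ^ ((e w : ℕ)) =
        n * ∑ i ∈ (G.neighborFinset x).image (fun w => ((e w : ℕ))), 2 ^ i := by
      intro x
      rw [Finset.sum_image (fun a _ b _ hab => hinj hab), Finset.mul_sum]
    rw [hsum u, hsum v] at h
    have hdu : G.degree u < n := G.degree_lt_card_verts u
    have hdv : G.degree v < n := G.degree_lt_card_verts v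
    have hmod : G.degree u = G.degree v := by
      have := congrArg (· % n) h
      simpa [Nat.add_mul_mod_self_left, Nat.mod_eq_of_lt hdu, Nat.mod_eq_of_lt hdv] using this
    rw [hmod] at h
    have hS := Nat.eq_of_mul_eq_mul_left hn0 (Nat.add_left_cancel h)
    have himg := Finset.geomSum_injective (le_refl 2) hS
    have hNeq : G.neighborFinset u = G.neighborFinset v :=
      Finset.image_injective hinj himg
    have : v ∈ G.neighborFinset v := hNeq ▸ (G.mem_neighborFinset u v).mpr huv
    exact (G.mem_neighborFinset v v).mp this |>.ne rfl

theorem dLuckyNumber_lower_bound_regular {V : Type*} [Fintype V] (G : SimpleGraph V)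
    (hconn : G.Connected) (r : ℕ)
    (hdeg : ∀ v : V, (∃ Q : Finset V, G.IsNClique G.cliqueNum Q ∧ v ∈ Q) →
      G.degree v = r) :
    (dLuckyNumber G : ℤ) ≥ ⌈((r : ℚ) + 1) / ((r : ℚ) - (G.cliqueNum : ℚ) + 2)⌉ := by
  classical
  haveI : Nonempty V := hconn.nonempty
  set ω := G.cliqueNum with hω
  set k := dLuckyNumber G with hk
  -- the defining set is nonempty, so dLuckyNumber is a member
  obtain ⟨k₀, hk₀⟩ := exists_dlucky_aux G
  have hkmem : 0 < k ∧ ∃ ℓ : V → ℕ, (∀ v : V, 1 ≤ ℓ v ∧ ℓ v ≤ k) ∧ IsDLuckyLabeling G ℓ := by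
    have h := Nat.sInf_mem (s := {k : ℕ | 0 < k ∧ ∃ ℓ : V → ℕ,
      (∀ v : V, 1 ≤ ℓ v ∧ ℓ v ≤ k) ∧ IsDLuckyLabeling G ℓ}) ⟨k₀, hk₀⟩
    exact h
  obtain ⟨hkpos, ℓ, hℓ, hdl⟩ := hkmem
  -- a maximum clique
  obtain ⟨Q, hQ⟩ := G.exists_isNClique_cliqueNum
  have hQcard : Q.card = ω := hQ.card_eq
  have hω1 : 1 ≤ ω := by
    obtain ⟨v⟩ := ‹Nonempty V›
    have : ({v} : Finset V).card ≤ ω := SimpleGraph.IsClique.card_le_cliqueNum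
      (tc := by simp [SimpleGraph.isClique_iff, Set.Pairwise])
    simpa using this
  have hQne : Q.Nonempty := Finset.card_pos.mp (by omega)
  -- every vertex of Q has degree r
  have hdegQ : ∀ u ∈ Q, G.degree u = r := fun u hu => hdeg u ⟨Q, hQ, hu⟩
  -- Q.erase u ⊆ neighbors
  have herase : ∀ u ∈ Q, Q.erase u ⊆ G.neighborFinset u := by
    intro u hu w hw
    rw [SimpleGraph.mem_neighborFinset]
    exact (hQ.isClique (Finset.mem_of_mem_erase hw) hu (Finset.ne_of_mem_erase hw)).symm
  set S : ℤ := ∑ v ∈ Q, (ℓ v : ℤ) with hSdef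
  -- bounds on the d-lucky sums for u ∈ Q
  have key : ∀ u ∈ Q, (dLuckySum G ℓ u : ℤ) ∈
      Finset.Icc ((r : ℤ) + (S - k) + ((r : ℤ) - ω + 1))
        ((r : ℤ) + (S - 1) + ((r : ℤ) - ω + 1) * k) := by
    intro u hu
    have hdu : G.degree u = r := hdegQ u hu
    have hsub := herase u hu
    have hcardN : (G.neighborFinset u).card = r := by
      rw [← hdu]; exact G.card_neighborFinset_eq_degree u
    have hcardA : (Q.erase u).card = ω - 1 := by
      rw [Finset.card_erase_of_mem hu, hQcard]
    have hcardB : ((G.neighborFinset u \ Q.erase u).card : ℤ) = (r : ℤ) - ω + 1 := by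
      rw [Finset.card_sdiff_of_subset hsub, hcardA, hcardN]
      have hle : ω - 1 ≤ r := by
        calc ω - 1 = (Q.erase u).card := hcardA.symm
        _ ≤ (G.neighborFinset u).card := Finset.card_le_card hsub
        _ = r := hcardN
      push_cast [Nat.sub_sub_self, Nat.cast_sub hle, Nat.cast_sub hω1]
      ring
    -- split the sum
    have hsplit : (∑ v ∈ G.neighborFinset u, (ℓ v : ℤ)) =
        (∑ v ∈ G.neighborFinset u \ Q.erase u, (ℓ v : ℤ)) + ∑ v ∈ Q.erase u, (ℓ v : ℤ) :=
      (Finset.sum_sdiff hsub).symm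
    have hA : (∑ v ∈ Q.erase u, (ℓ v : ℤ)) = S - ℓ u := by
      rw [hSdef, ← Finset.add_sum_erase Q _ hu]; ring
    have hℓu1 : (1 : ℤ) ≤ ℓ u := by exact_mod_cast (hℓ u).1
    have hℓuk : (ℓ u : ℤ) ≤ k := by exact_mod_cast (hℓ u).2
    have hBlo : ((G.neighborFinset u \ Q.erase u).card : ℤ) ≤
        ∑ v ∈ G.neighborFinset u \ Q.erase u, (ℓ v : ℤ) := by
      calc ((G.neighborFinset u \ Q.erase u).card : ℤ)
          = ∑ _v ∈ G.neighborFinset u \ Q.erase u, (1 : ℤ) := by simp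
        _ ≤ _ := Finset.sum_le_sum (fun v _ => by exact_mod_cast (hℓ v).1)
    have hBhi : (∑ v ∈ G.neighborFinset u \ Q.erase u, (ℓ v : ℤ)) ≤
        ((G.neighborFinset u \ Q.erase u).card : ℤ) * k := by
      calc (∑ v ∈ G.neighborFinset u \ Q.erase u, (ℓ v : ℤ))
          ≤ ∑ _v ∈ G.neighborFinset u \ Q.erase u, (k : ℤ) :=
            Finset.sum_le_sum (fun v _ => by exact_mod_cast (hℓ v).2)
        _ = _ := by rw [Finset.sum_const, nsmul_eq_mul]
    have hd : (dLuckySum G ℓ u : ℤ) = (r : ℤ) +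
        ((∑ v ∈ G.neighborFinset u \ Q.erase u, (ℓ v : ℤ)) + (S - ℓ u)) := by
      rw [dLuckySum, hdu]
      push_cast
      rw [hsplit, hA]
    rw [Finset.mem_Icc, hd]
    rw [hcardB] at hBlo hBhi
    constructor <;> nlinarith [hBlo, hBhi, hℓu1, hℓuk]
  -- injectivity of dLuckySum on Q
  have hinj : Set.InjOn (fun u => (dLuckySum G ℓ u : ℤ)) Q := by
    intro a ha b hb hab
    by_contra hne
    have hadj : G.Adj a b := hQ.isClique ha hb hne
    simp only at hab
    exact hdl hadj (by exact_mod_cast hab)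
  have hcard := Finset.card_le_card_of_injOn _ key hinj
  rw [hQcard, Int.card_Icc] at hcard
  have hmain : (r : ℤ) + 1 ≤ ((r : ℤ) - ω + 2) * k := by
    have h1 : (ω : ℤ) ≤ ((r : ℤ) + (S - 1) + ((r : ℤ) - ω + 1) * k) + 1 -
        ((r : ℤ) + (S - k) + ((r : ℤ) - ω + 1)) := by omega
    nlinarith [h1]
  -- ω ≤ r + 1
  have hωr : (ω : ℤ) ≤ (r : ℤ) + 1 := by
    obtain ⟨u, hu⟩ := hQne
    have hcardA : (Q.erase u).card = ω - 1 := by rw [Finset.card_erase_of_mem hu, hQcard]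
    have : (Q.erase u).card ≤ G.degree u := by
      rw [← G.card_neighborFinset_eq_degree]
      exact Finset.card_le_card (herase u hu)
    rw [hcardA, hdegQ u hu] at this
    omega
  -- conclude
  rw [ge_iff_le, Int.ceil_le]
  have hden : (0 : ℚ) < (r : ℚ) - ω + 2 := by
    have : (ω : ℚ) ≤ (r : ℚ) + 1 := by exact_mod_cast hωr
    linarith
  rw [div_le_iff₀ hden]
  have : ((r : ℚ) + 1) ≤ ((r : ℚ) - ω + 2) * k := by exact_mod_cast hmain
  push_cast
  linarith
end

section
/- If n ≥ 2 and r ≥ 1, then η_dl(K_n ∘ \overline{K_r}) = ⌈(n + r) / (r + 1)⌉. -/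
attribute [local instance] Classical.propDecidable

/-- Generating relation for the corona `Kₙ ∘ (complement of K_r)`:
`Sum.inl i` is vertex `vᵢ` of the complete graph `Kₙ`, and `Sum.inr (i, a)`
is the pendant vertex `p_{i,a}` attached to `vᵢ`. -/
def coronaRel (n r : ℕ) : (Fin n ⊕ Fin n × Fin r) → (Fin n ⊕ Fin n × Fin r) → Prop
  | Sum.inl _, Sum.inl _ => True
  | Sum.inl i, Sum.inr p => p.1 = i
  | _, _ => False

/-- The corona `Kₙ ∘ (complement of K_r)`: the vertices `v₁, …, vₙ` are pairwise
adjacent, each pendant vertex `p_{i,a}` is adjacent exactly to `vᵢ`, and there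
are no other edges. -/
def corona (n r : ℕ) : SimpleGraph (Fin n ⊕ Fin n × Fin r) :=
  SimpleGraph.fromRel (coronaRel n r)

namespace CoronaAux

variable {n r : ℕ}

lemma adj_ll {i j : Fin n} : (corona n r).Adj (Sum.inl i) (Sum.inl j) ↔ i ≠ j := by
  simp [corona, SimpleGraph.fromRel_adj, coronaRel]

lemma adj_lr {i : Fin n} {p : Fin n × Fin r} :
    (corona n r).Adj (Sum.inl i) (Sum.inr p) ↔ p.1 = i := by
  simp [corona, SimpleGraph.fromRel_adj, coronaRel]

lemma adj_rl {i : Fin n} {p : Fin n × Fin r} :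
    (corona n r).Adj (Sum.inr p) (Sum.inl i) ↔ p.1 = i := by
  simp [corona, SimpleGraph.fromRel_adj, coronaRel]

lemma adj_rr {p q : Fin n × Fin r} : ¬ (corona n r).Adj (Sum.inr p) (Sum.inr q) := by
  simp [corona, SimpleGraph.fromRel_adj, coronaRel]

lemma nsum_inl (f : (Fin n ⊕ Fin n × Fin r) → ℕ) (i : Fin n) :
    ∑ v ∈ (corona n r).neighborFinset (Sum.inl i), f v
      = (∑ j ∈ Finset.univ.erase i, f (Sum.inl j)) + ∑ a : Fin r, f (Sum.inr (i, a)) := by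
  classical
  rw [SimpleGraph.neighborFinset_eq_filter, Finset.sum_filter, Fintype.sum_sum_type]
  congr 1
  · rw [← Finset.sum_filter]
    apply Finset.sum_congr
    · ext j; simp [adj_ll, Finset.mem_erase, eq_comm]
    · intros; rfl
  · rw [Fintype.sum_prod_type]
    simp only [adj_lr]
    have h : ∀ j : Fin n, (∑ a : Fin r, if (j = i) then f (Sum.inr (j,a)) else 0)
        = if j = i then ∑ a : Fin r, f (Sum.inr (j,a)) else 0 := by
      intro j; split <;> simp
    simp_rw [h]
    simp

lemma nsum_inr (f : (Fin n ⊕ Fin n × Fin r) → ℕ) (p : Fin n × Fin r) :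
    ∑ v ∈ (corona n r).neighborFinset (Sum.inr p), f v = f (Sum.inl p.1) := by
  classical
  rw [SimpleGraph.neighborFinset_eq_filter, Finset.sum_filter, Fintype.sum_sum_type]
  simp [adj_rl, adj_rr]

lemma deg_inl (i : Fin n) : (corona n r).degree (Sum.inl i) = (n - 1) + r := by
  classical
  rw [← SimpleGraph.card_neighborFinset_eq_degree, Finset.card_eq_sum_ones,
    nsum_inl (fun _ => 1) i]
  simp [Finset.card_erase_of_mem]

lemma deg_inr (p : Fin n × Fin r) : (corona n r).degree (Sum.inr p) = 1 := by
  classical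
  rw [← SimpleGraph.card_neighborFinset_eq_degree, Finset.card_eq_sum_ones,
    nsum_inr (fun _ => 1) p]

lemma dls_inl (ℓ : (Fin n ⊕ Fin n × Fin r) → ℕ) (i : Fin n) :
    dLuckySum (corona n r) ℓ (Sum.inl i)
      = (n - 1) + r + ((∑ j ∈ Finset.univ.erase i, ℓ (Sum.inl j))
          + ∑ a : Fin r, ℓ (Sum.inr (i, a))) := by
  rw [dLuckySum, deg_inl, nsum_inl]

lemma dls_inr (ℓ : (Fin n ⊕ Fin n × Fin r) → ℕ) (p : Fin n × Fin r) :
    dLuckySum (corona n r) ℓ (Sum.inr p) = 1 + ℓ (Sum.inl p.1) := by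
  rw [dLuckySum, deg_inr, nsum_inr]

lemma sum_min_sub (m t : ℕ) : ∀ r : ℕ,
    ∑ a ∈ Finset.range r, min m (t - a * m) = min t (r * m) := by
  intro r
  induction r with
  | zero => simp
  | succ s ih =>
    rw [Finset.sum_range_succ, ih, Nat.succ_mul]
    omega

end CoronaAux

open CoronaAux
theorem dLuckyNumber_corona (n r : ℕ) (hn : 2 ≤ n) (hr : 1 ≤ r) :
    dLuckyNumber (corona n r) = ⌈((n : ℚ) + (r : ℚ)) / ((r : ℚ) + 1)⌉₊ := by
  classical
  set k : ℕ := ⌈((n : ℚ) + (r : ℚ)) / ((r : ℚ) + 1)⌉₊ with hk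
  have hrq : (0 : ℚ) < (r : ℚ) + 1 := by positivity
  -- basic facts about k
  have hk1 : n + r ≤ k * (r + 1) := by
    have h := Nat.le_ceil (((n : ℚ) + (r : ℚ)) / ((r : ℚ) + 1))
    rw [div_le_iff₀ hrq, ← hk] at h
    exact_mod_cast h
  have hk2 : k ≤ n := by
    rw [hk]
    apply Nat.ceil_le.mpr
    rw [div_le_iff₀ hrq]
    have h : (n : ℚ) + r ≤ n * (r + 1) := by
      have : (r : ℚ) ≤ n * r := by
        nlinarith [show (1:ℚ) ≤ n by exact_mod_cast le_trans (by norm_num) hn]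
      nlinarith
    exact h
  have hk3 : 1 ≤ k := by
    rw [hk]
    apply Nat.one_le_ceil_iff.mpr
    positivity
  -- the labeling witnessing the upper bound
  set ℓ : (Fin n ⊕ Fin n × Fin r) → ℕ :=
    Sum.elim (fun i => (k - 1 - (i : ℕ)) + 1)
      (fun p => 1 + min (k - 1) (((p.1 : ℕ) - (k - 1)) - (p.2 : ℕ) * (k - 1))) with hℓ
  have hbounds : ∀ v, 1 ≤ ℓ v ∧ ℓ v ≤ k := by
    rintro (i | p)
    · constructor
      · simp [hℓ]
      · simp only [hℓ, Sum.elim_inl]; omega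
    · constructor
      · simp [hℓ]
      · simp only [hℓ, Sum.elim_inr]; omega
  -- pendant sums
  have hP : ∀ i : Fin n, (∑ a : Fin r, ℓ (Sum.inr (i, a))) = r + ((i : ℕ) - (k - 1)) := by
    intro i
    have ht : (i : ℕ) - (k - 1) ≤ r * (k - 1) := by
      have h1 : r * (k - 1) + r = r * k := by
        rw [← Nat.mul_succ]; congr 1; omega
      have h2 : k * (r + 1) = r * k + k := by ring
      rw [h2] at hk1
      have hi : (i : ℕ) < n := i.isLt
      omega
    simp only [hℓ, Sum.elim_inr]
    rw [Finset.sum_add_distrib]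
    simp only [Finset.sum_const, Finset.card_univ, Fintype.card_fin, smul_eq_mul, mul_one]
    have := sum_min_sub (k - 1) ((i : ℕ) - (k - 1)) r
    rw [Fin.sum_univ_eq_sum_range (fun a => min (k - 1) (((i : ℕ) - (k - 1)) - a * (k - 1)))]
    rw [this, Nat.min_eq_left ht]
  -- sums over the erased hub labels
  have hS : ∀ i : Fin n, ((k - 1 - (i : ℕ)) + 1) + (∑ j ∈ Finset.univ.erase i, ℓ (Sum.inl j))
      = ∑ j : Fin n, ℓ (Sum.inl j) := by
    intro i
    have := Finset.add_sum_erase Finset.univ (fun j : Fin n => ℓ (Sum.inl j))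
      (Finset.mem_univ i)
    simpa [hℓ] using this
  have hE : ∀ i : Fin n, n - 1 ≤ ∑ j ∈ Finset.univ.erase i, ℓ (Sum.inl j) := by
    intro i
    calc n - 1 = (Finset.univ.erase i).card • 1 := by
          simp [Finset.card_erase_of_mem]
      _ ≤ ∑ j ∈ Finset.univ.erase i, ℓ (Sum.inl j) :=
          Finset.card_nsmul_le_sum _ _ _ (fun j _ => (hbounds (Sum.inl j)).1)
  -- the labeling is d-lucky
  have hdl : IsDLuckyLabeling (corona n r) ℓ := by
    rintro (i | p) (j | q) hadj
    · -- hub-hub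
      have hij : i ≠ j := adj_ll.mp hadj
      have hij' : (i : ℕ) ≠ (j : ℕ) := fun h => hij (Fin.val_injective h)
      rw [dls_inl, dls_inl, hP i, hP j]
      have h1 := hS i
      have h2 := hS j
      omega
    · -- hub-pendant
      have hq : q.1 = i := adj_lr.mp hadj
      rw [dls_inl, dls_inr, hP i, hq]
      have h1 := hE i
      have h2 := (hbounds (Sum.inl i)).2
      have h3 := (hbounds (Sum.inl i)).1
      omega
    · -- pendant-hub
      have hq : p.1 = j := adj_rl.mp hadj
      rw [dls_inl, dls_inr, hP j, hq]
      have h1 := hE j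
      have h2 := (hbounds (Sum.inl j)).2
      have h3 := (hbounds (Sum.inl j)).1
      omega
    · exact absurd hadj adj_rr
  have hmem : k ∈ {m : ℕ | 0 < m ∧ ∃ ℓ : (Fin n ⊕ Fin n × Fin r) → ℕ,
      (∀ v, 1 ≤ ℓ v ∧ ℓ v ≤ m) ∧ IsDLuckyLabeling (corona n r) ℓ} :=
    ⟨hk3, ℓ, hbounds, hdl⟩
  -- lower bound
  have hlow : ∀ m ∈ {m : ℕ | 0 < m ∧ ∃ ℓ : (Fin n ⊕ Fin n × Fin r) → ℕ,
      (∀ v, 1 ≤ ℓ v ∧ ℓ v ≤ m) ∧ IsDLuckyLabeling (corona n r) ℓ}, k ≤ m := by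
    rintro m ⟨hm, ℓ', hb', hd'⟩
    set g : Fin n → ℤ := fun i =>
      ((∑ a : Fin r, ℓ' (Sum.inr (i, a)) : ℕ) : ℤ) - (ℓ' (Sum.inl i) : ℤ) with hg
    have hginj : Function.Injective g := by
      intro i j hgij
      by_contra hij
      apply hd' (adj_ll.mpr hij)
      rw [dls_inl, dls_inl]
      have h1 := Finset.add_sum_erase Finset.univ (fun x : Fin n => ℓ' (Sum.inl x))
        (Finset.mem_univ i)
      have h2 := Finset.add_sum_erase Finset.univ (fun x : Fin n => ℓ' (Sum.inl x))
        (Finset.mem_univ j)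
      simp only [hg] at hgij
      omega
    have hmaps : ∀ i ∈ (Finset.univ : Finset (Fin n)),
        g i ∈ Finset.Icc ((r : ℤ) - m) ((r : ℤ) * m - 1) := by
      intro i _
      have hP1 : (r : ℕ) ≤ ∑ a : Fin r, ℓ' (Sum.inr (i, a)) := by
        calc (r : ℕ) = (Finset.univ : Finset (Fin r)).card • 1 := by simp
          _ ≤ _ := Finset.card_nsmul_le_sum _ _ _ (fun a _ => (hb' (Sum.inr (i, a))).1)
      have hP2 : (∑ a : Fin r, ℓ' (Sum.inr (i, a))) ≤ r * m := by
        calc (∑ a : Fin r, ℓ' (Sum.inr (i, a)))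
            ≤ (Finset.univ : Finset (Fin r)).card • m :=
              Finset.sum_le_card_nsmul _ _ _ (fun a _ => (hb' (Sum.inr (i, a))).2)
          _ = r * m := by simp
      have hL1 := (hb' (Sum.inl i)).1
      have hL2 := (hb' (Sum.inl i)).2
      simp only [hg, Finset.mem_Icc]
      omega
    have hcard := Finset.card_le_card_of_injOn g hmaps hginj.injOn
    rw [Finset.card_univ, Fintype.card_fin, Int.card_Icc] at hcard
    have hnm : (n : ℤ) + r ≤ (m : ℤ) * (r + 1) := by
      have hring : (m : ℤ) * (r + 1) = r * m + m := by ring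
      omega
    rw [hk]
    apply Nat.ceil_le.mpr
    rw [div_le_iff₀ hrq]
    have : (n : ℚ) + r ≤ (m : ℚ) * (r + 1) := by exact_mod_cast hnm
    exact this
  rw [dLuckyNumber]
  exact le_antisymm (Nat.sInf_le hmem) (le_csInf ⟨k, hmem⟩ hlow)
end

section
/- If n ≥ 2 and r ≥ 1, then η_dl(K_n ∘ \overline{K_r}) ≥ ⌈(n + r) / (r + 1)⌉. -/
attribute [local instance] Classical.propDecidable

open Finset

lemma corona_adj_ll {n r : ℕ} (i j : Fin n) :
    (corona n r).Adj (Sum.inl i) (Sum.inl j) ↔ i ≠ j := by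
  simp [corona, coronaRel]

lemma corona_adj_lr {n r : ℕ} (i : Fin n) (p : Fin n × Fin r) :
    (corona n r).Adj (Sum.inl i) (Sum.inr p) ↔ p.1 = i := by
  simp [corona, coronaRel]

lemma corona_adj_rl {n r : ℕ} (i : Fin n) (p : Fin n × Fin r) :
    (corona n r).Adj (Sum.inr p) (Sum.inl i) ↔ p.1 = i := by
  simp [corona, coronaRel]

lemma corona_adj_rr {n r : ℕ} (p q : Fin n × Fin r) :
    ¬ (corona n r).Adj (Sum.inr p) (Sum.inr q) := by
  simp [corona, coronaRel]

lemma sum_nf_inl (n r : ℕ) (f : (Fin n ⊕ Fin n × Fin r) → ℕ) (i : Fin n) :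
    ∑ v ∈ (corona n r).neighborFinset (Sum.inl i), f v
      = (∑ j ∈ Finset.univ.erase i, f (Sum.inl j)) + ∑ a : Fin r, f (Sum.inr (i, a)) := by
  rw [SimpleGraph.neighborFinset_eq_filter, Finset.sum_filter, Fintype.sum_sum_type]
  congr 1
  · calc ∑ j : Fin n, (if (corona n r).Adj (Sum.inl i) (Sum.inl j) then f (Sum.inl j) else 0)
        = ∑ j : Fin n, (if j ≠ i then f (Sum.inl j) else 0) := by
          refine Finset.sum_congr rfl fun j _ => ?_
          rw [if_congr ((corona_adj_ll i j).trans ne_comm) rfl rfl]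
      _ = ∑ j ∈ Finset.univ.filter (· ≠ i), f (Sum.inl j) := (Finset.sum_filter _ _).symm
      _ = _ := by rw [Finset.filter_ne']
  · calc ∑ p : Fin n × Fin r, (if (corona n r).Adj (Sum.inl i) (Sum.inr p) then f (Sum.inr p) else 0)
        = ∑ p : Fin n × Fin r, (if p.1 = i then f (Sum.inr p) else 0) := by
          refine Finset.sum_congr rfl fun p _ => ?_
          rw [if_congr (corona_adj_lr i p) rfl rfl]
      _ = ∑ j : Fin n, ∑ a : Fin r, (if j = i then f (Sum.inr (j, a)) else 0) := by
          rw [Fintype.sum_prod_type]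
      _ = ∑ j : Fin n, (if j = i then ∑ a : Fin r, f (Sum.inr (j, a)) else 0) := by
          refine Finset.sum_congr rfl fun j _ => ?_
          split <;> simp
      _ = _ := by rw [Finset.sum_ite_eq' Finset.univ i]; simp

lemma nf_inr (n r : ℕ) (p : Fin n × Fin r) :
    (corona n r).neighborFinset (Sum.inr p) = {Sum.inl p.1} := by
  ext v
  rw [SimpleGraph.mem_neighborFinset]
  cases v with
  | inl j => simp [corona_adj_rl, eq_comm]
  | inr q => simp [corona_adj_rr]

lemma dsum_inl (n r : ℕ) (ℓ : (Fin n ⊕ Fin n × Fin r) → ℕ) (i : Fin n) :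
    dLuckySum (corona n r) ℓ (Sum.inl i)
      = (n - 1 + r) + ((∑ j ∈ Finset.univ.erase i, ℓ (Sum.inl j))
          + ∑ a : Fin r, ℓ (Sum.inr (i, a))) := by
  unfold dLuckySum
  have hdeg : (corona n r).degree (Sum.inl i) = (n - 1) + r := by
    rw [SimpleGraph.degree, Finset.card_eq_sum_ones, sum_nf_inl n r (fun _ => 1) i]
    simp [Finset.card_erase_of_mem]
  rw [hdeg, sum_nf_inl]

lemma dsum_inr (n r : ℕ) (ℓ : (Fin n ⊕ Fin n × Fin r) → ℕ) (p : Fin n × Fin r) :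
    dLuckySum (corona n r) ℓ (Sum.inr p) = 1 + ℓ (Sum.inl p.1) := by
  unfold dLuckySum
  rw [SimpleGraph.degree, nf_inr]
  simp

lemma key_bound (n r k : ℕ) (hn : 2 ≤ n) (hr : 1 ≤ r) (hk : 0 < k)
    (ℓ : (Fin n ⊕ Fin n × Fin r) → ℕ) (hb : ∀ v, 1 ≤ ℓ v ∧ ℓ v ≤ k)
    (hd : IsDLuckyLabeling (corona n r) ℓ) : n + r ≤ k * (r + 1) := by
  obtain ⟨m, hm⟩ : ∃ m, r * k = m := ⟨_, rfl⟩
  set f : Fin n → ℕ :=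
    fun i => (∑ a : Fin r, ℓ (Sum.inr (i, a))) + (k - ℓ (Sum.inl i)) with hf
  have hS : ∀ i : Fin n, ℓ (Sum.inl i) + (∑ j ∈ Finset.univ.erase i, ℓ (Sum.inl j))
      = ∑ j : Fin n, ℓ (Sum.inl j) :=
    fun i => Finset.add_sum_erase Finset.univ (fun j => ℓ (Sum.inl j)) (Finset.mem_univ i)
  have hPlow : ∀ i : Fin n, r ≤ ∑ a : Fin r, ℓ (Sum.inr (i, a)) := by
    intro i
    calc r = Finset.univ.card • 1 := by simp [Finset.card_univ]
      _ ≤ ∑ a : Fin r, ℓ (Sum.inr (i, a)) :=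
        Finset.card_nsmul_le_sum _ _ _ (fun a _ => (hb _).1)
  have hPhigh : ∀ i : Fin n, (∑ a : Fin r, ℓ (Sum.inr (i, a))) ≤ m := by
    intro i
    calc (∑ a : Fin r, ℓ (Sum.inr (i, a))) ≤ Finset.univ.card • k :=
        Finset.sum_le_card_nsmul _ _ _ (fun a _ => (hb _).2)
      _ = m := by simp [Finset.card_univ, ← hm]
  have hmaps : ∀ i, f i ∈ Finset.Icc r (m + k - 1) := by
    intro i
    simp only [hf, Finset.mem_Icc]
    have h1 := hPhigh i
    have h2 := (hb (Sum.inl i)).1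
    have h3 := (hb (Sum.inl i)).2
    have h4 := hPlow i
    omega
  have hinj : ∀ i ∈ (Finset.univ : Finset (Fin n)), ∀ j ∈ Finset.univ,
      f i = f j → i = j := by
    intro i _ j _ hfij
    by_contra hij
    apply hd ((corona_adj_ll i j).mpr hij)
    rw [dsum_inl, dsum_inl]
    have h1 := hS i
    have h2 := hS j
    have h3 : (∑ a : Fin r, ℓ (Sum.inr (i, a))) + ℓ (Sum.inl j)
        = (∑ a : Fin r, ℓ (Sum.inr (j, a))) + ℓ (Sum.inl i) := by
      have := (hb (Sum.inl i)).2
      have := (hb (Sum.inl j)).2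
      simp only [hf] at hfij
      omega
    omega
  have hcard : n ≤ (Finset.Icc r (m + k - 1)).card := by
    calc n = (Finset.univ : Finset (Fin n)).card := by simp
      _ ≤ _ := Finset.card_le_card_of_injOn f (fun i _ => hmaps i)
            (fun i hi j hj h => hinj i hi j hj h)
  rw [Nat.card_Icc] at hcard
  have hrk : r ≤ m := hm ▸ Nat.le_mul_of_pos_right r hk
  have hkr : k * (r + 1) = m + k := by rw [← hm]; ring
  rw [hkr]
  omega

lemma corona_nonempty (n r : ℕ) (hn : 2 ≤ n) (hr : 1 ≤ r) :
    ∃ ℓ : (Fin n ⊕ Fin n × Fin r) → ℕ,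
      (∀ v, 1 ≤ ℓ v ∧ ℓ v ≤ n) ∧ IsDLuckyLabeling (corona n r) ℓ := by
  classical
  refine ⟨fun v => match v with | Sum.inl i => i.val + 1 | Sum.inr _ => 1, ?_, ?_⟩
  · rintro (i | p)
    · exact ⟨Nat.le_add_left _ _, i.isLt⟩
    · exact ⟨le_rfl, show (1:ℕ) ≤ n by omega⟩
  · set ℓ : (Fin n ⊕ Fin n × Fin r) → ℕ :=
      fun v => match v with | Sum.inl i => i.val + 1 | Sum.inr _ => 1 with hℓ
    have hval : ∀ i : Fin n, ℓ (Sum.inl i) = i.val + 1 := fun _ => rfl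
    have hPr : ∀ i : Fin n, (∑ a : Fin r, ℓ (Sum.inr (i, a))) = r := by
      intro i
      calc (∑ a : Fin r, ℓ (Sum.inr (i, a))) = ∑ _a : Fin r, 1 :=
          Finset.sum_congr rfl (fun a _ => rfl)
        _ = r := by simp
    have hA : ∀ i : Fin n, ℓ (Sum.inl i) + (∑ j ∈ Finset.univ.erase i, ℓ (Sum.inl j))
        = ∑ j : Fin n, ℓ (Sum.inl j) :=
      fun i => Finset.add_sum_erase Finset.univ (fun j => ℓ (Sum.inl j)) (Finset.mem_univ i)
    have hAlow : ∀ i : Fin n, n - 1 ≤ ∑ j ∈ Finset.univ.erase i, ℓ (Sum.inl j) := by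
      intro i
      calc n - 1 = (Finset.univ.erase i).card • 1 := by
            simp [Finset.card_erase_of_mem]
        _ ≤ _ := Finset.card_nsmul_le_sum _ _ _ (fun j _ => Nat.le_add_left 1 _)
    intro u v hadj
    match u, v with
    | Sum.inl i, Sum.inl j =>
      rw [corona_adj_ll] at hadj
      rw [dsum_inl, dsum_inl, hPr i]
      have h1 := hA i
      have h2 := hA j
      have h3 : i.val ≠ j.val := fun h => hadj (Fin.val_injective h)
      have h4 := hval i
      have h5 := hval j
      omega
    | Sum.inl i, Sum.inr p =>
      rw [corona_adj_lr] at hadj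
      rw [dsum_inl, dsum_inr, hPr i, hadj]
      have h1 := hAlow i
      have h2 : i.val < n := i.isLt
      have h4 := hval i
      omega
    | Sum.inr p, Sum.inl i =>
      rw [corona_adj_rl] at hadj
      rw [dsum_inr, dsum_inl, hPr i, hadj]
      have h1 := hAlow i
      have h2 : i.val < n := i.isLt
      have h4 := hval i
      omega
    | Sum.inr p, Sum.inr q => exact absurd hadj (corona_adj_rr p q)

theorem dLuckyNumber_corona_lower (n r : ℕ) (hn : 2 ≤ n) (hr : 1 ≤ r) :
    dLuckyNumber (corona n r) ≥ ⌈((n : ℚ) + (r : ℚ)) / ((r : ℚ) + 1)⌉₊ := by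
  apply le_csInf
  · obtain ⟨ℓ, hb, hd⟩ := corona_nonempty n r hn hr
    exact ⟨n, by omega, ℓ, hb, hd⟩
  · rintro k ⟨hk, ℓ, hb, hd⟩
    have hkey := key_bound n r k hn hr hk ℓ hb hd
    rw [Nat.ceil_le, div_le_iff₀ (by positivity)]
    exact_mod_cast hkey
end

section
/- If m ≥ 3 and n ≥ 5, then the d-lucky number of the web graph G_{m,n} equals ⌈(n + 1) / 2⌉, i.e. η_dl(G_{m,n}) = ⌈(n + 1) / 2⌉. -/
attribute [local instance] Classical.propDecidable

/-- Vertices of the web graph `G_{m,n}`: `v i` are the complete-graph vertices,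
`u i` the subdivision vertices of the matching edges, `w i j` the cylinder
vertices (layer `j` of the `j`-th copy of `Cₙ`), and `x i j` the subdivision
vertices of the path (`P_m`-layer) edges. -/
inductive WebV (m n : ℕ) : Type
  | v : Fin n → WebV m n
  | u : Fin n → WebV m n
  | w : Fin n → Fin m → WebV m n
  | x : Fin n → Fin (m - 1) → WebV m n
  deriving DecidableEq, Fintype

/-- Generating relation for the web graph `G_{m,n}`. -/
def webRel (m n : ℕ) : WebV m n → WebV m n → Prop
  | WebV.v _, WebV.v _ => True
  | WebV.u i, WebV.v i' => i = i'
  | WebV.u i, WebV.w i' j => i = i' ∧ (j : ℕ) = 0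
  | WebV.w i j, WebV.w i' j' => j = j' ∧ (i' : ℕ) = ((i : ℕ) + 1) % n
  | WebV.x i j, WebV.w i' j' => i = i' ∧ ((j' : ℕ) = (j : ℕ) ∨ (j' : ℕ) = (j : ℕ) + 1)
  | _, _ => False

/-- The web graph `G_{m,n}`: the `v i` are pairwise adjacent (a copy of `Kₙ`);
`u i` is adjacent exactly to `v i` and `w i 0`; for each layer `j` the vertices
`w · j` form a cycle (`w i j ~ w (i+1) j`, indices mod `n`); and `x i j` is
adjacent exactly to `w i j` and `w i (j+1)`. -/
def webGraph (m n : ℕ) : SimpleGraph (WebV m n) :=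
  SimpleGraph.fromRel (webRel m n)

variable {m n : ℕ}

lemma adj_iff {a b : WebV m n} :
    (webGraph m n).Adj a b ↔ a ≠ b ∧ (webRel m n a b ∨ webRel m n b a) :=
  SimpleGraph.fromRel_adj _ _ _

lemma NV (i : Fin n) : (webGraph m n).neighborFinset (WebV.v i)
    = insert (WebV.u i) ((Finset.univ.erase i).image WebV.v) := by
  ext t
  cases t <;>
    simp [SimpleGraph.mem_neighborFinset, adj_iff, webRel, eq_comm, Fin.ext_iff] <;>
    aesop
lemma NU (hm : 3 ≤ m) (i : Fin n) : (webGraph m n).neighborFinset (WebV.u i)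
    = {WebV.v i, WebV.w i ⟨0, by omega⟩} := by
  ext t
  cases t <;>
    simp [SimpleGraph.mem_neighborFinset, adj_iff, webRel, eq_comm, Fin.ext_iff] <;>
    aesop

lemma NX (hm : 3 ≤ m) (i : Fin n) (j : Fin (m-1)) :
    (webGraph m n).neighborFinset (WebV.x i j)
    = {WebV.w i ⟨j.val, by omega⟩, WebV.w i ⟨j.val+1, by omega⟩} := by
  ext t
  cases t with
  | v i' => simp [SimpleGraph.mem_neighborFinset, adj_iff, webRel]
  | u i' => simp [SimpleGraph.mem_neighborFinset, adj_iff, webRel]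
  | w i' j' =>
      simp only [SimpleGraph.mem_neighborFinset, adj_iff, webRel, Finset.mem_insert,
        Finset.mem_singleton, WebV.w.injEq, Fin.ext_iff]
      constructor
      · rintro ⟨hne, ⟨hi, h | h⟩ | h⟩
        · exact Or.inl ⟨hi.symm, h⟩
        · exact Or.inr ⟨hi.symm, h⟩
        · exact absurd h not_false
      · rintro (⟨h1, h2⟩ | ⟨h1, h2⟩) <;>
          exact ⟨by rintro ⟨⟩, Or.inl ⟨h1.symm, by omega⟩⟩
  | x i' j' => simp [SimpleGraph.mem_neighborFinset, adj_iff, webRel]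
lemma modfacts (hn : 5 ≤ n) (a : ℕ) (ha : a < n) :
    ((a+1 = n ∧ (a+1)%n = 0) ∨ (a+1 < n ∧ (a+1)%n = a+1)) := by
  rcases eq_or_ne (a+1) n with h | h
  · rw [h, Nat.mod_self]; omega
  · rw [Nat.mod_eq_of_lt (by omega)]; omega

lemma modfacts' (hn : 5 ≤ n) (a : ℕ) (ha : a < n) :
    ((a = 0 ∧ (a+n-1)%n = n-1) ∨ (1 ≤ a ∧ (a+n-1)%n = a-1)) := by
  rcases Nat.eq_zero_or_pos a with h | h
  · subst h; rw [Nat.mod_eq_of_lt (by omega)]; omega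
  · rw [show a+n-1 = (a-1) + 1*n by omega, Nat.add_mul_mod_self_right,
      Nat.mod_eq_of_lt (by omega)]
    omega

lemma NW0 (hm : 3 ≤ m) (hn : 5 ≤ n) (i : Fin n) (j : Fin m) (hj : j.val = 0) :
    (webGraph m n).neighborFinset (WebV.w i j)
    = {WebV.w ⟨(i.val+1)%n, Nat.mod_lt _ (by omega)⟩ j,
       WebV.w ⟨(i.val+n-1)%n, Nat.mod_lt _ (by omega)⟩ j,
       WebV.u i, WebV.x i ⟨0, by omega⟩} := by
  have hi := i.isLt
  have e1 := modfacts hn i.val hi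
  have e3 := modfacts' hn i.val hi
  ext t
  cases t with
  | v i' => simp [SimpleGraph.mem_neighborFinset, adj_iff, webRel]
  | u i' =>
      simp only [SimpleGraph.mem_neighborFinset, adj_iff, webRel, Finset.mem_insert,
        Finset.mem_singleton, WebV.u.injEq, Fin.ext_iff, ne_eq, reduceCtorEq,
        not_false_eq_true, true_and, or_false, false_or]
      omega
  | w i' j' =>
      have e2 := modfacts hn i'.val i'.isLt
      simp only [SimpleGraph.mem_neighborFinset, adj_iff, webRel, Finset.mem_insert,
        Finset.mem_singleton, WebV.w.injEq, Fin.ext_iff, ne_eq, reduceCtorEq,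
        not_false_eq_true, true_and, or_false, false_or, not_and]
      omega
  | x i' j' =>
      simp only [SimpleGraph.mem_neighborFinset, adj_iff, webRel, Finset.mem_insert,
        Finset.mem_singleton, WebV.x.injEq, Fin.ext_iff, ne_eq, reduceCtorEq,
        not_false_eq_true, true_and, or_false, false_or]
      omega
lemma NWmid (hm : 3 ≤ m) (hn : 5 ≤ n) (i : Fin n) (j : Fin m)
    (hj : 0 < j.val) (hj2 : j.val < m - 1) :
    (webGraph m n).neighborFinset (WebV.w i j)
    = {WebV.w ⟨(i.val+1)%n, Nat.mod_lt _ (by omega)⟩ j,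
       WebV.w ⟨(i.val+n-1)%n, Nat.mod_lt _ (by omega)⟩ j,
       WebV.x i ⟨j.val - 1, by omega⟩, WebV.x i ⟨j.val, by omega⟩} := by
  have hi := i.isLt
  have e1 := modfacts hn i.val hi
  have e3 := modfacts' hn i.val hi
  ext t
  cases t with
  | v i' => simp [SimpleGraph.mem_neighborFinset, adj_iff, webRel]
  | u i' =>
      simp only [SimpleGraph.mem_neighborFinset, adj_iff, webRel, Finset.mem_insert,
        Finset.mem_singleton, WebV.u.injEq, Fin.ext_iff, ne_eq, reduceCtorEq,
        not_false_eq_true, true_and, or_false, false_or]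
      constructor <;> intro h <;> first | exact h.elim | omega
  | w i' j' =>
      have e2 := modfacts hn i'.val i'.isLt
      simp only [SimpleGraph.mem_neighborFinset, adj_iff, webRel, Finset.mem_insert,
        Finset.mem_singleton, WebV.w.injEq, Fin.ext_iff, ne_eq, reduceCtorEq,
        not_false_eq_true, true_and, or_false, false_or, not_and]
      constructor <;> intro h <;> first | exact h.elim | omega
  | x i' j' =>
      have := j'.isLt
      simp only [SimpleGraph.mem_neighborFinset, adj_iff, webRel, Finset.mem_insert,
        Finset.mem_singleton, WebV.x.injEq, Fin.ext_iff, ne_eq, reduceCtorEq,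
        not_false_eq_true, true_and, or_false, false_or]
      constructor <;> intro h <;> first | exact h.elim | omega

lemma NWtop (hm : 3 ≤ m) (hn : 5 ≤ n) (i : Fin n) (j : Fin m) (hj : j.val = m - 1) :
    (webGraph m n).neighborFinset (WebV.w i j)
    = {WebV.w ⟨(i.val+1)%n, Nat.mod_lt _ (by omega)⟩ j,
       WebV.w ⟨(i.val+n-1)%n, Nat.mod_lt _ (by omega)⟩ j,
       WebV.x i ⟨m-2, by omega⟩} := by
  have hi := i.isLt
  have e1 := modfacts hn i.val hi
  have e3 := modfacts' hn i.val hi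
  ext t
  cases t with
  | v i' => simp [SimpleGraph.mem_neighborFinset, adj_iff, webRel]
  | u i' =>
      simp only [SimpleGraph.mem_neighborFinset, adj_iff, webRel, Finset.mem_insert,
        Finset.mem_singleton, WebV.u.injEq, Fin.ext_iff, ne_eq, reduceCtorEq,
        not_false_eq_true, true_and, or_false, false_or]
      constructor <;> intro h <;> first | exact h.elim | omega
  | w i' j' =>
      have e2 := modfacts hn i'.val i'.isLt
      simp only [SimpleGraph.mem_neighborFinset, adj_iff, webRel, Finset.mem_insert,
        Finset.mem_singleton, WebV.w.injEq, Fin.ext_iff, ne_eq, reduceCtorEq,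
        not_false_eq_true, true_and, or_false, false_or, not_and]
      constructor <;> intro h <;> first | exact h.elim | omega
  | x i' j' =>
      have := j'.isLt
      simp only [SimpleGraph.mem_neighborFinset, adj_iff, webRel, Finset.mem_insert,
        Finset.mem_singleton, WebV.x.injEq, Fin.ext_iff, ne_eq, reduceCtorEq,
        not_false_eq_true, true_and, or_false, false_or]
      constructor <;> intro h <;> first | exact h.elim | omega
def Aa (n i : ℕ) : ℕ := if i % 2 = 0 then (if n % 2 = 1 ∧ i = n - 1 then 3 else 2) else 1
def Bb (i : ℕ) : ℕ := if i % 2 = 0 then 3 else if i = 9 then 1 else 2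
def Uu (i : ℕ) : ℕ := if i % 2 = 0 then i / 2 + 1 else 1
def Vv (i : ℕ) : ℕ := if i % 2 = 0 then 1 else (i + 1) / 2 + 1

def lab (m n : ℕ) : WebV m n → ℕ
  | .v i => Vv i.val
  | .u i => Uu i.val
  | .w _ _ => 1
  | .x i j => if (j : ℕ) = 0 then Bb i.val else Aa n i.val

lemma deg_eq (G : SimpleGraph (WebV m n)) (t : WebV m n) :
    dLuckySum G (lab m n) t = (G.neighborFinset t).card + ∑ s ∈ G.neighborFinset t, lab m n s := by
  rw [dLuckySum, ← SimpleGraph.card_neighborFinset_eq_degree]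

lemma L1 (hn : 5 ≤ n) (i : Fin n) :
    dLuckySum (webGraph m n) (lab m n) (WebV.v i)
      = n + Uu i.val + ∑ i' ∈ Finset.univ.erase i, Vv (i' : ℕ) := by
  have hinj : Function.Injective (WebV.v : Fin n → WebV m n) := by
    intro a b h; injection h
  rw [deg_eq, NV]
  have hnm : (WebV.u i : WebV m n) ∉ (Finset.univ.erase i).image WebV.v := by simp
  rw [Finset.sum_insert hnm, Finset.card_insert_of_notMem hnm,
    Finset.card_image_of_injective _ hinj, Finset.sum_image (fun a _ b _ h => hinj h),
    Finset.card_erase_of_mem (Finset.mem_univ i), Finset.card_univ, Fintype.card_fin]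
  simp only [lab]
  omega

lemma L2 (hm : 3 ≤ m) (hn : 5 ≤ n) (i : Fin n) :
    dLuckySum (webGraph m n) (lab m n) (WebV.u i) = 3 + Vv i.val := by
  rw [deg_eq, NU hm]
  rw [Finset.sum_insert (by simp), Finset.card_insert_of_notMem (by simp),
    Finset.sum_singleton, Finset.card_singleton]
  simp only [lab]
  omega
lemma pq_ne (hn : 5 ≤ n) (i : Fin n) : (i.val+1)%n ≠ (i.val+n-1)%n := by
  have := modfacts hn i.val i.isLt
  have := modfacts' hn i.val i.isLt
  omega

lemma L3 (hm : 3 ≤ m) (hn : 5 ≤ n) (i : Fin n) (j : Fin m) (hj : j.val = 0) :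
    dLuckySum (webGraph m n) (lab m n) (WebV.w i j) = 6 + Uu i.val + Bb i.val := by
  have hpq := pq_ne hn i
  rw [deg_eq, NW0 hm hn i j hj]
  rw [Finset.sum_insert (by simp [Fin.ext_iff, hpq]),
    Finset.card_insert_of_notMem (by simp [Fin.ext_iff, hpq]),
    Finset.sum_insert (by simp), Finset.card_insert_of_notMem (by simp),
    Finset.sum_insert (by simp), Finset.card_insert_of_notMem (by simp),
    Finset.sum_singleton, Finset.card_singleton]
  simp [lab]
  omega

lemma L4 (hm : 3 ≤ m) (hn : 5 ≤ n) (i : Fin n) (j : Fin m)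
    (hj : 0 < j.val) (hj2 : j.val < m - 1) :
    dLuckySum (webGraph m n) (lab m n) (WebV.w i j)
      = 6 + (if j.val = 1 then Bb i.val else Aa n i.val) + Aa n i.val := by
  have hpq := pq_ne hn i
  rw [deg_eq, NWmid hm hn i j hj hj2]
  rw [Finset.sum_insert (by simp [Fin.ext_iff, hpq]),
    Finset.card_insert_of_notMem (by simp [Fin.ext_iff, hpq]),
    Finset.sum_insert (by simp), Finset.card_insert_of_notMem (by simp),
    Finset.sum_insert (by simp [Fin.ext_iff]; omega),
    Finset.card_insert_of_notMem (by simp [Fin.ext_iff]; omega),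
    Finset.sum_singleton, Finset.card_singleton]
  simp only [lab]
  have hz : ¬ (j.val = 0) := by omega
  rcases eq_or_ne j.val 1 with h1 | h1
  · simp [h1, hz]; omega
  · have hz2 : ¬ (j.val - 1 = 0) := by omega
    simp [h1, hz, hz2]; omega

lemma L5 (hm : 3 ≤ m) (hn : 5 ≤ n) (i : Fin n) (j : Fin m) (hj : j.val = m - 1) :
    dLuckySum (webGraph m n) (lab m n) (WebV.w i j) = 5 + Aa n i.val := by
  have hpq := pq_ne hn i
  rw [deg_eq, NWtop hm hn i j hj]
  rw [Finset.sum_insert (by simp [Fin.ext_iff, hpq]),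
    Finset.card_insert_of_notMem (by simp [Fin.ext_iff, hpq]),
    Finset.sum_insert (by simp), Finset.card_insert_of_notMem (by simp),
    Finset.sum_singleton, Finset.card_singleton]
  have h2 : ¬ (m - 2 = 0) := by omega
  simp only [lab, h2, if_false]
  omega

lemma L6 (hm : 3 ≤ m) (hn : 5 ≤ n) (i : Fin n) (j : Fin (m-1)) :
    dLuckySum (webGraph m n) (lab m n) (WebV.x i j) = 4 := by
  rw [deg_eq, NX hm]
  rw [Finset.sum_insert (by simp [Fin.ext_iff]),
    Finset.card_insert_of_notMem (by simp [Fin.ext_iff]),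
    Finset.sum_singleton, Finset.card_singleton]
  simp [lab]
lemma Ple (hn : 5 ≤ n) (i : ℕ) (hi : i < n) :
    (1 ≤ Aa n i ∧ Aa n i ≤ n/2+1) ∧ (1 ≤ Bb i ∧ Bb i ≤ n/2+1) ∧
    (1 ≤ Uu i ∧ Uu i ≤ n/2+1) ∧ (1 ≤ Vv i ∧ Vv i ≤ n/2+1) := by
  unfold Aa Bb Uu Vv; split_ifs <;> omega

lemma P1 (i i' : ℕ) (hne : i ≠ i') : Uu i + Vv i' ≠ Uu i' + Vv i := by
  unfold Uu Vv; split_ifs <;> omega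

lemma P2 (hn : 5 ≤ n) (i i' : ℕ) (h : i < n) (h' : i' < n) (hc : i' = (i+1)%n) :
    Uu i + Bb i ≠ Uu i' + Bb i' := by
  have := modfacts (n := n) hn i h
  unfold Uu Bb; split_ifs <;> omega

lemma P3 (hn : 5 ≤ n) (i i' : ℕ) (h : i < n) (h' : i' < n) (hc : i' = (i+1)%n) :
    Bb i + Aa n i ≠ Bb i' + Aa n i' := by
  have := modfacts (n := n) hn i h
  unfold Aa Bb; split_ifs <;> omega

lemma P4 (hn : 5 ≤ n) (i i' : ℕ) (h : i < n) (h' : i' < n) (hc : i' = (i+1)%n) :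
    Aa n i ≠ Aa n i' := by
  have := modfacts (n := n) hn i h
  unfold Aa; split_ifs <;> omega

lemma P5 (i : ℕ) : Vv i ≠ 3 + Uu i + Bb i := by
  unfold Uu Vv Bb; split_ifs <;> omega
lemma L1' (hn : 5 ≤ n) (ℓ : WebV m n → ℕ) (i : Fin n) :
    dLuckySum (webGraph m n) ℓ (WebV.v i)
      = n + ℓ (WebV.u i) + ∑ i' ∈ Finset.univ.erase i, ℓ (WebV.v i') := by
  have hinj : Function.Injective (WebV.v : Fin n → WebV m n) := by
    intro a b h; injection h
  rw [dLuckySum, ← SimpleGraph.card_neighborFinset_eq_degree, NV]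
  have hnm : (WebV.u i : WebV m n) ∉ (Finset.univ.erase i).image WebV.v := by simp
  rw [Finset.sum_insert hnm, Finset.card_insert_of_notMem hnm,
    Finset.card_image_of_injective _ hinj, Finset.sum_image (fun a _ b _ h => hinj h),
    Finset.card_erase_of_mem (Finset.mem_univ i), Finset.card_univ, Fintype.card_fin]
  omega

lemma Tbound (ℓ : WebV m n → ℕ) (hb : ∀ t, 1 ≤ ℓ t) (i : Fin n) :
    n - 1 ≤ ∑ i' ∈ Finset.univ.erase i, ℓ (WebV.v i' : WebV m n) := by
  calc n - 1 = (Finset.univ.erase i).card • 1 := by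
        rw [Finset.card_erase_of_mem (Finset.mem_univ i), Finset.card_univ,
          Fintype.card_fin, smul_eq_mul, mul_one]
    _ ≤ _ := Finset.card_nsmul_le_sum _ _ _ (fun x _ => hb _)

lemma key (hm : 3 ≤ m) (hn : 5 ≤ n) (a b : WebV m n) (hne : a ≠ b)
    (hrel : webRel m n a b) :
    dLuckySum (webGraph m n) (lab m n) a ≠ dLuckySum (webGraph m n) (lab m n) b := by
  cases a with
  | v i =>
    cases b with
    | v i' =>
      have hii : i ≠ i' := fun h => hne (by rw [h])
      rw [L1' hn, L1' hn]
      have h1 := Finset.sum_erase_add Finset.univ (fun t => lab m n (WebV.v t))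
        (Finset.mem_univ i)
      have h2 := Finset.sum_erase_add Finset.univ (fun t => lab m n (WebV.v t))
        (Finset.mem_univ i')
      have hp := P1 i.val i'.val (fun h => hii (Fin.ext h))
      simp only [lab] at *
      omega
    | u i' => exact hrel.elim
    | w i' j => exact hrel.elim
    | x i' j => exact hrel.elim
  | u i =>
    cases b with
    | v i' =>
      have hii : i = i' := hrel
      subst hii
      rw [L2 hm hn, L1' hn]
      have hT := Tbound (lab m n) (by
        intro t
        cases t with
        | v i => exact ((Ple hn i.val i.isLt).2.2.2).1
        | u i => exact ((Ple hn i.val i.isLt).2.2.1).1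
        | w i j => exact le_refl 1
        | x i j => by_cases h : (j : ℕ) = 0 <;> simp [lab, h]
          <;> [exact ((Ple hn i.val i.isLt).2.1).1; exact ((Ple hn i.val i.isLt).1).1]) i
      have hV := ((Ple hn i.val i.isLt).2.2.2).2
      have hU := ((Ple hn i.val i.isLt).2.2.1).1
      simp only [lab] at *
      omega
    | u i' => exact hrel.elim
    | w i' j =>
      obtain ⟨hii, hj⟩ := hrel
      subst hii
      rw [L2 hm hn, L3 hm hn _ _ hj]
      have := P5 i.val
      omega
    | x i' j => exact hrel.elim
  | w i j =>
    cases b with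
    | v i' => exact hrel.elim
    | u i' => exact hrel.elim
    | w i' j' =>
      obtain ⟨hjj, hc⟩ := hrel
      subst hjj
      have hcases : j.val = 0 ∨ (0 < j.val ∧ j.val < m - 1) ∨ j.val = m - 1 := by
        have := j.isLt; omega
      rcases hcases with hj | ⟨hj1, hj2⟩ | hj
      · rw [L3 hm hn _ _ hj, L3 hm hn _ _ hj]
        have := P2 hn i.val i'.val i.isLt i'.isLt hc
        omega
      · rw [L4 hm hn _ _ hj1 hj2, L4 hm hn _ _ hj1 hj2]
        have := P3 hn i.val i'.val i.isLt i'.isLt hc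
        have := P4 hn i.val i'.val i.isLt i'.isLt hc
        split_ifs <;> omega
      · rw [L5 hm hn _ _ hj, L5 hm hn _ _ hj]
        have := P4 hn i.val i'.val i.isLt i'.isLt hc
        omega
    | x i' j' => exact hrel.elim
  | x i j =>
    cases b with
    | v i' => exact hrel.elim
    | u i' => exact hrel.elim
    | w i' j' =>
      rw [L6 hm hn]
      have hb1 := (Ple hn i'.val i'.isLt).1.1
      have hb2 := (Ple hn i'.val i'.isLt).2.1.1
      have hb3 := (Ple hn i'.val i'.isLt).2.2.1.1
      have hcases : j'.val = 0 ∨ (0 < j'.val ∧ j'.val < m - 1) ∨ j'.val = m - 1 := by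
        have := j'.isLt; omega
      rcases hcases with hj | ⟨hj1, hj2⟩ | hj
      · rw [L3 hm hn _ _ hj]; omega
      · rw [L4 hm hn _ _ hj1 hj2]; split_ifs <;> omega
      · rw [L5 hm hn _ _ hj]; omega
    | x i' j' => exact hrel.elim

theorem dLuckyNumber_webGraph (m n : ℕ) (hm : 3 ≤ m) (hn : 5 ≤ n) :
    dLuckyNumber (webGraph m n) = ⌈((n : ℚ) + 1) / 2⌉₊ := by
  have hceil : ⌈((n : ℚ) + 1) / 2⌉₊ = n / 2 + 1 := by
    rw [Nat.ceil_eq_iff (by omega)]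
    constructor
    · have h : (n / 2) * 2 < n + 1 := by omega
      rw [Nat.add_sub_cancel, lt_div_iff₀ (by norm_num : (0:ℚ) < 2)]
      exact_mod_cast h
    · have h : n + 1 ≤ (n / 2 + 1) * 2 := by omega
      rw [div_le_iff₀ (by norm_num : (0:ℚ) < 2)]
      exact_mod_cast h
  have hmem : (n/2+1) ∈ {k : ℕ | 0 < k ∧ ∃ ℓ : WebV m n → ℕ,
      (∀ v, 1 ≤ ℓ v ∧ ℓ v ≤ k) ∧ IsDLuckyLabeling (webGraph m n) ℓ} := by
    refine ⟨by omega, lab m n, ?_, ?_⟩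
    · intro t
      cases t with
      | v i => exact (Ple hn i.val i.isLt).2.2.2
      | u i => exact (Ple hn i.val i.isLt).2.2.1
      | w i j => simp only [lab]; exact ⟨le_refl 1, by omega⟩
      | x i j =>
          by_cases h : (j:ℕ) = 0 <;> simp only [lab, h, if_true, if_false] <;>
            [exact (Ple hn i.val i.isLt).2.1; exact (Ple hn i.val i.isLt).1]
    · intro a b hadj
      rw [adj_iff] at hadj
      obtain ⟨hne, h | h⟩ := hadj
      · exact key hm hn a b hne h
      · exact (key hm hn b a hne.symm h).symm
  rw [hceil]
  unfold dLuckyNumber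
  refine le_antisymm (Nat.sInf_le hmem) (le_csInf ⟨_, hmem⟩ ?_)
  rintro j ⟨hj0, ℓ, hbd, hdl⟩
  have hinj : Set.InjOn (fun i : Fin n => ℓ (WebV.u i) + j - ℓ (WebV.v i))
      (Finset.univ : Finset (Fin n)) := by
    intro i _ i' _ hg
    by_contra hne
    have hadj : (webGraph m n).Adj (WebV.v i) (WebV.v i') := by
      rw [adj_iff]
      exact ⟨fun h => hne (by injection h), Or.inl trivial⟩
    apply hdl hadj
    rw [L1' hn, L1' hn]
    have h1 := Finset.sum_erase_add Finset.univ (fun t => ℓ (WebV.v t)) (Finset.mem_univ i)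
    have h2 := Finset.sum_erase_add Finset.univ (fun t => ℓ (WebV.v t)) (Finset.mem_univ i')
    have b1 := hbd (WebV.u i)
    have b2 := hbd (WebV.u i')
    have b3 := hbd (WebV.v i)
    have b4 := hbd (WebV.v i')
    simp only at hg h1 h2
    omega
  have hmaps : ∀ a ∈ (Finset.univ : Finset (Fin n)),
      (fun i : Fin n => ℓ (WebV.u i) + j - ℓ (WebV.v i)) a ∈ Finset.Icc 1 (2*j-1) := by
    intro a _
    have b1 := hbd (WebV.u a)
    have b2 := hbd (WebV.v a)
    simp only [Finset.mem_Icc]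
    omega
  have hcard := Finset.card_le_card_of_injOn _ hmaps hinj
  rw [Finset.card_univ, Fintype.card_fin, Nat.card_Icc] at hcard
  omega
end

section
/- If m ≥ 3 and n ≥ 5, then η_dl(G_{m,n}) ≥ ⌈(n + 1) / 2⌉, where G_{m,n} is the web graph. -/
attribute [local instance] Classical.propDecidable

lemma exists_dlucky {V : Type*} [Fintype V] (G : SimpleGraph V) :
    ∃ k : ℕ, 0 < k ∧ ∃ ℓ : V → ℕ, (∀ v : V, 1 ≤ ℓ v ∧ ℓ v ≤ k) ∧ IsDLuckyLabeling G ℓ := by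
  classical
  set N := Fintype.card V with hN
  set e := Fintype.equivFin V with he
  set C := N + 1 with hC
  refine ⟨C * 2 ^ N, by positivity, fun x => C * 2 ^ ((e x : ℕ)), fun x => ⟨Nat.succ_le_of_lt (by positivity), ?_⟩, ?_⟩
  · exact Nat.mul_le_mul_left _ (Nat.pow_le_pow_right (by norm_num) (le_of_lt (e x).isLt))
  · intro a b hab h
    have hkey : ∀ u : V, dLuckySum G (fun x => C * 2 ^ ((e x : ℕ))) u
        = G.degree u + C * ∑ v ∈ G.neighborFinset u, 2 ^ ((e v : ℕ)) := by
      intro u; unfold dLuckySum; rw [Finset.mul_sum]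
    rw [hkey, hkey] at h
    have hda : G.degree a < C := Nat.lt_succ_of_lt (G.degree_lt_card_verts a)
    have hdb : G.degree b < C := Nat.lt_succ_of_lt (G.degree_lt_card_verts b)
    have hCpos : 0 < C := Nat.succ_pos _
    have hA : (∑ v ∈ G.neighborFinset a, 2 ^ ((e v : ℕ)))
        = (∑ v ∈ G.neighborFinset b, 2 ^ ((e v : ℕ))) := by
      have h1 := congrArg (· / C) h
      simpa [Nat.add_mul_div_left _ _ hCpos, Nat.div_eq_of_lt hda, Nat.div_eq_of_lt hdb] using h1
    have hinj : Function.Injective (fun v : V => ((e v : ℕ))) :=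
      Fin.val_injective.comp e.injective
    have hA' : (∑ i ∈ (G.neighborFinset a).image (fun v => ((e v : ℕ))), 2 ^ i)
        = (∑ i ∈ (G.neighborFinset b).image (fun v => ((e v : ℕ))), 2 ^ i) := by
      rw [Finset.sum_image (fun x _ y _ hxy => hinj hxy),
        Finset.sum_image (fun x _ y _ hxy => hinj hxy)]
      exact hA
    have himg := Finset.geomSum_injective (le_refl 2) hA'
    have hnb : G.neighborFinset a = G.neighborFinset b :=
      Finset.image_injective hinj himg
    have hb : b ∈ G.neighborFinset a := (SimpleGraph.mem_neighborFinset _ _ _).2 hab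
    rw [hnb] at hb
    exact G.irrefl ((SimpleGraph.mem_neighborFinset _ _ _).1 hb)

theorem dLuckyNumber_webGraph_lower (m n : ℕ) (hm : 3 ≤ m) (hn : 5 ≤ n) :
    dLuckyNumber (webGraph m n) ≥ ⌈((n : ℚ) + 1) / 2⌉₊ := by
  classical
  have hne : {k : ℕ | 0 < k ∧ ∃ ℓ : WebV m n → ℕ,
      (∀ v : WebV m n, 1 ≤ ℓ v ∧ ℓ v ≤ k) ∧ IsDLuckyLabeling (webGraph m n) ℓ}.Nonempty := by
    obtain ⟨k, hk⟩ := exists_dlucky (webGraph m n)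
    exact ⟨k, hk⟩
  refine le_csInf hne ?_
  rintro k ⟨hk, ℓ, hb, hℓ⟩
  -- neighborhood of v i
  have hvinj : Function.Injective (WebV.v : Fin n → WebV m n) := fun a b h => by
    injection h
  have hnb : ∀ i : Fin n, (webGraph m n).neighborFinset (WebV.v i)
      = insert (WebV.u (m := m) i) ((Finset.univ.erase i).image WebV.v) := by
    intro i
    ext x
    cases x <;> rw [SimpleGraph.mem_neighborFinset] <;>
      simp [SimpleGraph.mem_neighborFinset, webGraph, SimpleGraph.fromRel_adj, webRel,
        eq_comm, hvinj.eq_iff]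
  have hdeg : ∀ i : Fin n, (webGraph m n).degree (WebV.v i) = n := by
    intro i
    rw [SimpleGraph.degree, hnb i, Finset.card_insert_of_notMem (by simp),
      Finset.card_image_of_injective _ hvinj, Finset.card_erase_of_mem (Finset.mem_univ i),
      Finset.card_univ, Fintype.card_fin]
    omega
  have hsum : ∀ i : Fin n, (dLuckySum (webGraph m n) ℓ (WebV.v i) : ℤ)
      = n + (∑ j : Fin n, (ℓ (WebV.v j) : ℤ)) + ℓ (WebV.u (m := m) i) - ℓ (WebV.v (m := m) i) := by
    intro i
    unfold dLuckySum
    rw [hdeg i, hnb i, Finset.sum_insert (by simp),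
      Finset.sum_image (fun a _ b _ hab => hvinj hab)]
    have h := Finset.sum_erase_add Finset.univ (fun j => (ℓ (WebV.v (m := m) j) : ℤ))
      (Finset.mem_univ i)
    push_cast
    push_cast at h
    linarith
  set g : Fin n → ℤ := fun i => (ℓ (WebV.u (m := m) i) : ℤ) - ℓ (WebV.v (m := m) i) with hg
  have hcard : (Finset.univ : Finset (Fin n)).card ≤ (Finset.Icc (1 - k : ℤ) (k - 1)).card := by
    apply Finset.card_le_card_of_injOn g
    · intro i _
      have h1 := hb (WebV.u (m := m) i)
      have h2 := hb (WebV.v (m := m) i)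
      simp only [Finset.mem_coe, Finset.mem_Icc, hg]
      omega
    · intro i _ i' _ hgi
      by_contra hii
      have hadj : (webGraph m n).Adj (WebV.v i) (WebV.v i') := by
        simp [webGraph, SimpleGraph.fromRel_adj, webRel, hvinj.eq_iff]
        exact hii
      apply hℓ hadj
      have : (dLuckySum (webGraph m n) ℓ (WebV.v i) : ℤ)
          = dLuckySum (webGraph m n) ℓ (WebV.v i') := by
        rw [hsum i, hsum i']
        have : g i = g i' := hgi
        simp only [hg] at this
        linarith
      exact_mod_cast this
  rw [Finset.card_univ, Fintype.card_fin, Int.card_Icc] at hcard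
  have hk2 : n + 1 ≤ 2 * k := by omega
  rw [Nat.ceil_le, div_le_iff₀ (by norm_num : (0:ℚ) < 2)]
  have h3 : n + 1 ≤ k * 2 := by omega
  exact_mod_cast h3
end

section
/- Let m ≥ 3 and n ≥ 5. In the web graph G_{m,n}, the set {v_1,…,v_n} is the unique clique of maximum size (so ω(G_{m,n}) = n), and every vertex v_i has degree n in G_{m,n}. -/
attribute [local instance] Classical.propDecidable

lemma succ_mod {n : ℕ} (a : Fin n) :
    ((a:ℕ)+1) % n = if (a:ℕ)+1 = n then 0 else (a:ℕ)+1 := by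
  split_ifs with h
  · rw [h, Nat.mod_self]
  · exact Nat.mod_eq_of_lt (by have := a.isLt; omega)

lemma tri (m n : ℕ) (hn : 5 ≤ n) : ∀ {a b c : WebV m n},
    (webGraph m n).Adj a b → (webGraph m n).Adj a c → (webGraph m n).Adj b c →
    ∃ i, a = WebV.v i := by
  rintro (ia|ia|⟨ia,ja⟩|⟨ia,ja⟩) (ib|ib|⟨ib,jb⟩|⟨ib,jb⟩) (ic|ic|⟨ic,jc⟩|⟨ic,jc⟩) hab hac hbc <;>
    simp only [webGraph, webRel, SimpleGraph.fromRel_adj, ne_eq, or_false, false_or,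
      or_self, and_false, false_and, and_true, true_and] at hab hac hbc ⊢
  · exact ⟨ia, rfl⟩
  · exact ⟨ia, rfl⟩
  · exact ⟨ia, rfl⟩
  case u.v.v => simp_all
  case u.w.w =>
    have e1 : (ib:ℕ) = ic := by rw [← hab.2.1, hac.2.1]
    have h := hbc.2.imp And.right And.right
    simp only [succ_mod] at h
    have := ib.isLt; have := ic.isLt; split_ifs at h <;> omega
  case w.u.w =>
    have e1 : (ia:ℕ) = ic := by rw [← hab.2.1, hbc.2.1]
    have h := hac.2.imp And.right And.right
    simp only [succ_mod] at h
    have := ia.isLt; have := ic.isLt; split_ifs at h <;> omega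
  case w.w.u =>
    have e1 : (ia:ℕ) = ib := by rw [← hac.2.1, hbc.2.1]
    have h := hab.2.imp And.right And.right
    simp only [succ_mod] at h
    have := ia.isLt; have := ib.isLt; split_ifs at h <;> omega
  case w.w.w =>
    have h1 := hab.2.imp And.right And.right
    have h2 := hac.2.imp And.right And.right
    have h3 := hbc.2.imp And.right And.right
    simp only [succ_mod] at h1 h2 h3
    have := ia.isLt; have := ib.isLt; have := ic.isLt
    split_ifs at h1 h2 h3 <;> omega
  case w.w.x =>
    have e1 : (ia:ℕ) = ib := by rw [← hac.2.1, hbc.2.1]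
    have h := hab.2.imp And.right And.right
    simp only [succ_mod] at h
    have := ia.isLt; have := ib.isLt; split_ifs at h <;> omega
  case w.x.w =>
    have e1 : (ia:ℕ) = ic := by rw [← hab.2.1, hbc.2.1]
    have h := hac.2.imp And.right And.right
    simp only [succ_mod] at h
    have := ia.isLt; have := ic.isLt; split_ifs at h <;> omega
  case x.w.w =>
    have e1 : (ib:ℕ) = ic := by rw [← hab.2.1, hac.2.1]
    have h := hbc.2.imp And.right And.right
    simp only [succ_mod] at h
    have := ib.isLt; have := ic.isLt; split_ifs at h <;> omega

lemma v_inj {m n : ℕ} : Function.Injective (WebV.v : Fin n → WebV m n) := by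
  intro a b h; injection h

lemma card_image_v (m n : ℕ) :
    (Finset.univ.image (WebV.v : Fin n → WebV m n)).card = n := by
  rw [Finset.card_image_of_injective _ v_inj, Finset.card_univ, Fintype.card_fin]

lemma web_isNClique (m n : ℕ) :
    (webGraph m n).IsNClique n (Finset.univ.image (WebV.v : Fin n → WebV m n)) := by
  constructor
  · intro a ha b hb hne
    simp only [Finset.coe_image, Set.mem_image, Finset.mem_coe, Finset.coe_univ,
      Set.image_univ, Set.mem_range] at ha hb
    obtain ⟨i, rfl⟩ := ha
    obtain ⟨j, rfl⟩ := hb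
    exact ⟨hne, Or.inl trivial⟩
  · exact card_image_v m n

lemma clique_sub (m n : ℕ) (hn : 5 ≤ n) (Q : Finset (WebV m n))
    (hQ : (webGraph m n).IsClique Q) (h3 : 3 ≤ Q.card) :
    Q ⊆ Finset.univ.image (WebV.v : Fin n → WebV m n) := by
  intro a ha
  have h2 : 2 ≤ (Q.erase a).card := by
    have := Finset.card_erase_of_mem ha; omega
  obtain ⟨b, hb⟩ := Finset.card_pos.mp (by omega : 0 < (Q.erase a).card)
  have h1 : 0 < ((Q.erase a).erase b).card := by
    have := Finset.card_erase_of_mem hb; omega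
  obtain ⟨c, hc⟩ := Finset.card_pos.mp h1
  have hba : b ≠ a := Finset.ne_of_mem_erase hb
  have hcb : c ≠ b := Finset.ne_of_mem_erase hc
  have hca : c ≠ a := Finset.ne_of_mem_erase (Finset.mem_of_mem_erase hc)
  have hbQ : b ∈ Q := Finset.mem_of_mem_erase hb
  have hcQ : c ∈ Q := Finset.mem_of_mem_erase (Finset.mem_of_mem_erase hc)
  have hab := hQ ha hbQ (Ne.symm hba)
  have hac := hQ ha hcQ (Ne.symm hca)
  have hbc := hQ hbQ hcQ (Ne.symm hcb)
  obtain ⟨i, rfl⟩ := tri m n hn hab hac hbc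
  simp

theorem webGraph_clique_and_degrees (m n : ℕ) (hm : 3 ≤ m) (hn : 5 ≤ n) :
    (webGraph m n).IsNClique n (Finset.univ.image (WebV.v : Fin n → WebV m n)) ∧
    (webGraph m n).cliqueNum = n ∧
    (∀ Q : Finset (WebV m n), (webGraph m n).IsNClique ((webGraph m n).cliqueNum) Q →
      Q = Finset.univ.image (WebV.v : Fin n → WebV m n)) ∧
    ∀ i : Fin n, (webGraph m n).degree (WebV.v i) = n := by
  have hK := web_isNClique m n
  have bound : ∀ Q : Finset (WebV m n), (webGraph m n).IsClique Q → Q.card ≤ n := by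
    intro Q hQ
    by_cases h3 : 3 ≤ Q.card
    · calc Q.card ≤ (Finset.univ.image (WebV.v : Fin n → WebV m n)).card :=
            Finset.card_le_card (clique_sub m n hn Q hQ h3)
        _ = n := card_image_v m n
    · omega
  have hnum : (webGraph m n).cliqueNum = n := by
    apply le_antisymm
    · obtain ⟨s, hs⟩ := (webGraph m n).exists_isNClique_cliqueNum
      rw [← hs.2]
      exact bound s hs.1
    · have := SimpleGraph.IsClique.card_le_cliqueNum (tc := hK.1)
      rwa [card_image_v m n] at this
  refine ⟨hK, hnum, ?_, ?_⟩
  · intro Q hQ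
    rw [hnum] at hQ
    have hsub := clique_sub m n hn Q hQ.1 (by rw [hQ.2]; omega)
    exact Finset.eq_of_subset_of_card_le hsub (by rw [hQ.2, card_image_v m n])
  · intro i
    have hset : (webGraph m n).neighborFinset (WebV.v i) =
        insert (WebV.u i) ((Finset.univ.image (WebV.v : Fin n → WebV m n)).erase (WebV.v i)) := by
      ext a
      rcases a with j|j|⟨j,k⟩|⟨j,k⟩ <;> rw [SimpleGraph.mem_neighborFinset] <;>
        simp [SimpleGraph.mem_neighborFinset, webGraph, SimpleGraph.fromRel_adj, webRel,
          eq_comm, Ne]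
    rw [SimpleGraph.degree, hset, Finset.card_insert_of_notMem (by simp),
      Finset.card_erase_of_mem (by simp), card_image_v m n]
    omega
end
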